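/- Let n ≥ 1 and N = n(n+1)/2, let {Ê_α}_{α∈S} be the standard orthonormal basis of SM(n) indexed by S = {(i,j) : 1 ≤ i ≤ j ≤ n} (Ê_{ij} = E_{ii} if i = j, Ê_{ij} = (E_{ij}+E_{ji})/√2 if i < j), and let x_α > 0 for all α ∈ S. Then Σ_{α,β∈S} x_α x_β ‖[Ê_α, Ê_β]‖² < (Σ_{α∈S} x_α)². -/

import Mathlib

open Matrix BigOperators

/-- The squared Frobenius norm: sum of squares of the entries. -/
noncomputable def frobSq {n : ℕ} (A : Matrix (Fin n) (Fin n) ℝ) : ℝ :=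
  ∑ i, ∑ j, (A i j) ^ 2

/-- The commutator of two matrices. -/
def mcomm {n : ℕ} (A B : Matrix (Fin n) (Fin n) ℝ) : Matrix (Fin n) (Fin n) ℝ :=
  A * B - B * A

/-- The standard orthonormal basis element `Ê_{ij}` of the space of symmetric matrices:
`Ê_{ii} = E_{ii}` and `Ê_{ij} = (E_{ij} + E_{ji})/√2` for `i ≠ j`. -/
noncomputable def Ehat {n : ℕ} (i j : Fin n) : Matrix (Fin n) (Fin n) ℝ :=
  if i = j then Matrix.single i i (1 : ℝ)
  else (1 / Real.sqrt 2) •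
    (Matrix.single i j (1 : ℝ) + Matrix.single j i (1 : ℝ))

/-!
For any two basis elements `‖[Ê_α, Ê_β]‖² ≤ 1`: the commutator vanishes unless `α` and `β`
share exactly one index, and then it is `c (E_{il} - E_{li})` with `c² ≤ 1/2`. Since
`[Ê_α, Ê_α] = 0`, the left side is at most `∑_{α ≠ β} x_α x_β`, which falls short of
`(∑ x_α)²` by `∑ x_α² > 0`.
-/

theorem sum_mul_sum_mul_lt_sq_sum {ι : Type*} {s : Finset ι} (hs : s.Nonempty)
    {x : ι → ℝ} (hx : ∀ p ∈ s, 0 < x p) {f : ι → ι → ℝ}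
    (hf : ∀ p ∈ s, ∀ q ∈ s, f p q ≤ 1) (hf_diag : ∀ p ∈ s, f p p = 0) :
    ∑ p ∈ s, ∑ q ∈ s, x p * x q * f p q < (∑ p ∈ s, x p) ^ 2 := by
  rw [sq, Finset.sum_mul_sum]
  refine Finset.sum_lt_sum_of_nonempty hs fun p hp =>
    Finset.sum_lt_sum (fun q hq => ?_) ⟨p, hp, ?_⟩
  · exact mul_le_of_le_one_right (mul_pos (hx p hp) (hx q hq)).le (hf p hp q hq)
  · simpa [hf_diag p hp] using mul_pos (hx p hp) (hx p hp)

section StandardBasis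

variable {n : ℕ}

theorem frobSq_smul (c : ℝ) (A : Matrix (Fin n) (Fin n) ℝ) :
    frobSq (c • A) = c ^ 2 * frobSq A := by
  simp [frobSq, Finset.mul_sum, mul_pow]

theorem frobSq_single_sub_single {a b : Fin n} (hab : a ≠ b) :
    frobSq (single a b (1 : ℝ) - single b a 1) = 2 := by
  simp [frobSq, single_apply, sub_sq, ite_and, Finset.sum_add_distrib, Finset.sum_sub_distrib,
    hab.symm, one_add_one_eq_two]

theorem Ehat_comm (i j : Fin n) : Ehat i j = Ehat j i := by
  by_cases h : i = j
  · rw [h]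
  · simp only [Ehat, if_neg h, if_neg (Ne.symm h), add_comm]

theorem mcomm_Ehat_of_disjoint {i j k l : Fin n} (hik : i ≠ k) (hil : i ≠ l) (hjk : j ≠ k)
    (hjl : j ≠ l) : mcomm (Ehat i j) (Ehat k l) = 0 := by
  unfold Ehat mcomm
  split_ifs <;>
    simp [hik, hil, hjk, hjl, hik.symm, hil.symm, hjk.symm, hjl.symm, mul_add, add_mul]

theorem exists_mcomm_Ehat_eq_smul {i j l : Fin n} (hil : i ≠ l) :
    ∃ c : ℝ, c ^ 2 ≤ 1 / 2 ∧
      mcomm (Ehat i j) (Ehat j l) = c • (single i l 1 - single l i 1) := by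
  have hs : (1 / √2 : ℝ) ^ 2 = 1 / 2 := by simp
  by_cases hij : i = j
  · subst hij
    refine ⟨1 / √2, hs.le, ?_⟩
    simp [mcomm, Ehat, hil, hil.symm, mul_add, add_mul, smul_sub]
  by_cases hjl : j = l
  · subst hjl
    refine ⟨1 / √2, hs.le, ?_⟩
    simp [mcomm, Ehat, hij, Ne.symm hij, mul_add, add_mul, smul_sub]
  · refine ⟨1 / √2 * (1 / √2), by rw [← sq, hs]; norm_num, ?_⟩
    simp [mcomm, Ehat, hij, Ne.symm hij, hjl, Ne.symm hjl, hil, hil.symm, mul_add, add_mul,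
      smul_sub]

theorem frobSq_mcomm_Ehat_shared_le_one (i j l : Fin n) :
    frobSq (mcomm (Ehat i j) (Ehat j l)) ≤ 1 := by
  by_cases hil : i = l
  · subst hil
    simp [Ehat_comm j i, mcomm, frobSq]
  obtain ⟨c, hc, hm⟩ := exists_mcomm_Ehat_eq_smul (j := j) hil
  rw [hm, frobSq_smul, frobSq_single_sub_single hil]
  linarith

theorem frobSq_mcomm_Ehat_le_one (i j k l : Fin n) :
    frobSq (mcomm (Ehat i j) (Ehat k l)) ≤ 1 := by
  by_cases hjk : j = k
  · subst hjk; exact frobSq_mcomm_Ehat_shared_le_one i j l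
  by_cases hik : i = k
  · subst hik; rw [Ehat_comm i j]; exact frobSq_mcomm_Ehat_shared_le_one j i l
  by_cases hjl : j = l
  · subst hjl; rw [Ehat_comm k j]; exact frobSq_mcomm_Ehat_shared_le_one i j k
  by_cases hil : i = l
  · subst hil; rw [Ehat_comm i j, Ehat_comm k i]; exact frobSq_mcomm_Ehat_shared_le_one j i k
  simp [mcomm_Ehat_of_disjoint hik hil hjk hjl, frobSq]

end StandardBasis

/-- Step 1 of the continuity method: for the standard basis `{Ê_α}_{α∈S}`,
`S = {(i,j) : i ≤ j}`, and any strictly positive weights `x_α`,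
`∑_{α,β∈S} x_α x_β ‖[Ê_α, Ê_β]‖² < (∑_{α∈S} x_α)²`. -/
theorem strict_inequality_standard_basis (n : ℕ) (hn : 1 ≤ n)
    (x : Fin n × Fin n → ℝ)
    (hx : ∀ p : Fin n × Fin n, p.1 ≤ p.2 → 0 < x p) :
    ∑ p ∈ Finset.univ.filter (fun p : Fin n × Fin n => p.1 ≤ p.2),
      ∑ q ∈ Finset.univ.filter (fun q : Fin n × Fin n => q.1 ≤ q.2),
        x p * x q * frobSq (mcomm (Ehat p.1 p.2) (Ehat q.1 q.2)) <
      (∑ p ∈ Finset.univ.filter (fun p : Fin n × Fin n => p.1 ≤ p.2), x p) ^ 2 := by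
  refine sum_mul_sum_mul_lt_sq_sum ⟨(⟨0, hn⟩, ⟨0, hn⟩), by simp⟩
    (fun p hp => hx p (Finset.mem_filter.mp hp).2)
    (fun p _ q _ => frobSq_mcomm_Ehat_le_one _ _ _ _) (fun p _ => ?_)
  simp [mcomm, frobSq]
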